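/- The truncated AoII Markov chain is primitive (irreducible and aperiodic): there exists N ∈ ℕ such that for all n ≥ N and all states s, s' ∈ S, (Pⁿ)(s, s') > 0. (Aperiodicity follows from the positive self-loop P((0,0),(0,0)) = p_r > 0 together with irreducibility on the finite state space S.) -/
import Mathlib


/-- State space of the truncated AoII Markov chain:
`S = {(0,0)} ∪ {(f,g) : 1 ≤ f ≤ F, 1 ≤ g ≤ min f G}`. -/
def aoiiStates (F G : ℕ) : Finset (ℕ × ℕ) :=
  (Finset.range (F + 1) ×ˢ Finset.range (G + 1)).filter
    (fun s => s = (0, 0) ∨ (1 ≤ s.1 ∧ s.1 ≤ F ∧ 1 ≤ s.2 ∧ s.2 ≤ min s.1 G))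

/-- Transition matrix of the truncated AoII Markov chain, with `p_r = 1 - 2 p_t`
and truncation `[x]_T = min x T`; probabilities of coinciding target states
are added. -/
noncomputable def aoiiP (F G : ℕ) (pt : ℝ) (q : ℕ × ℕ → ℝ) (s s' : ℕ × ℕ) : ℝ :=
  if s = (0, 0) then
    (if s' = (1, 1) then 2 * pt else 0) +
    (if s' = (0, 0) then 1 - 2 * pt else 0)
  else if s.2 = 1 then
    (if s' = (min (s.1 + 1) F, 2) then pt * (1 - q s) else 0) +
    (if s' = (min (s.1 + 1) F, 1) then (1 - 2 * pt) * (1 - q s) else 0) +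
    (if s' = (0, 0) then pt + (1 - pt) * q s else 0)
  else
    (if s' = (min (s.1 + 1) F, min (s.2 + 1) G) then pt * (1 - q s) else 0) +
    (if s' = (min (s.1 + 1) F, s.2 - 1) then pt * (1 - q s) else 0) +
    (if s' = (min (s.1 + 1) F, s.2) then (1 - 2 * pt) * (1 - q s) else 0) +
    (if s' = (0, 0) then q s else 0)

/-- `n`-step transition probabilities (the `n`-th matrix power of `aoiiP`,
with the matrix indexed by the finite state space `aoiiStates F G`). -/
noncomputable def aoiiPn (F G : ℕ) (pt : ℝ) (q : ℕ × ℕ → ℝ) :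
    ℕ → ℕ × ℕ → ℕ × ℕ → ℝ
  | 0, s, s' => if s = s' then 1 else 0
  | n + 1, s, s' => ∑ u ∈ aoiiStates F G, aoiiPn F G pt q n s u * aoiiP F G pt q u s'

lemma mem_aoii {F G : ℕ} {s : ℕ × ℕ} :
    s ∈ aoiiStates F G ↔ (s = (0,0) ∨ (1 ≤ s.1 ∧ s.1 ≤ F ∧ 1 ≤ s.2 ∧ s.2 ≤ min s.1 G)) := by
  unfold aoiiStates
  simp only [Finset.mem_filter, Finset.mem_product, Finset.mem_range, Prod.ext_iff]
  constructor
  · exact fun h => h.2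
  · intro h
    refine ⟨⟨?_, ?_⟩, h⟩ <;> omega

lemma zero_mem (F G : ℕ) : ((0,0) : ℕ×ℕ) ∈ aoiiStates F G := by
  rw [mem_aoii]; left; rfl

lemma aoiiP_nonneg (F G : ℕ) (pt : ℝ) (q : ℕ × ℕ → ℝ) (hpt0 : 0 < pt) (hpt : pt < 1/2)
    {s : ℕ × ℕ} (h0 : 0 ≤ q s) (h1 : q s < 1) (s' : ℕ × ℕ) :
    0 ≤ aoiiP F G pt q s s' := by
  have a1 : 0 ≤ pt * (1 - q s) := mul_nonneg hpt0.le (by linarith)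
  have a2 : 0 ≤ (1 - 2*pt) * (1 - q s) := mul_nonneg (by linarith) (by linarith)
  have a3 : 0 ≤ pt + (1 - pt) * q s := by nlinarith
  unfold aoiiP
  split_ifs <;> linarith

lemma aoiiPn_succ (F G : ℕ) (pt : ℝ) (q : ℕ × ℕ → ℝ) (n : ℕ) (s s' : ℕ × ℕ) :
    aoiiPn F G pt q (n+1) s s' =
      ∑ u ∈ aoiiStates F G, aoiiPn F G pt q n s u * aoiiP F G pt q u s' := rfl

lemma aoiiPn_nonneg (F G : ℕ) (pt : ℝ) (q : ℕ × ℕ → ℝ) (hpt0 : 0 < pt) (hpt : pt < 1/2)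
    (hq : ∀ s ∈ aoiiStates F G, 0 ≤ q s ∧ q s < 1) :
    ∀ n s s', 0 ≤ aoiiPn F G pt q n s s' := by
  intro n
  induction n with
  | zero => intro s s'; unfold aoiiPn; split_ifs <;> norm_num
  | succ n ih =>
    intro s s'
    rw [aoiiPn_succ]
    refine Finset.sum_nonneg fun u hu => mul_nonneg (ih s u) ?_
    exact aoiiP_nonneg F G pt q hpt0 hpt (hq u hu).1 (hq u hu).2 s'

lemma aoiiPn_add (F G : ℕ) (pt : ℝ) (q : ℕ × ℕ → ℝ) (m : ℕ) :
    ∀ n s s', s' ∈ aoiiStates F G →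
      aoiiPn F G pt q (m + n) s s' =
        ∑ u ∈ aoiiStates F G, aoiiPn F G pt q m s u * aoiiPn F G pt q n u s' := by
  intro n
  induction n with
  | zero =>
    intro s s' hs'
    show aoiiPn F G pt q m s s' = _
    rw [Finset.sum_congr rfl (fun u _ => by rw [show aoiiPn F G pt q 0 u s' = if u = s' then 1 else 0 from rfl])]
    simp [Finset.sum_ite_eq' (aoiiStates F G) s', hs']
  | succ n ih =>
    intro s s' hs'
    calc aoiiPn F G pt q (m + (n+1)) s s'
        = ∑ v ∈ aoiiStates F G, aoiiPn F G pt q (m+n) s v * aoiiP F G pt q v s' := rfl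
      _ = ∑ v ∈ aoiiStates F G, (∑ u ∈ aoiiStates F G, aoiiPn F G pt q m s u * aoiiPn F G pt q n u v) * aoiiP F G pt q v s' := by
          exact Finset.sum_congr rfl fun v hv => by rw [ih s v hv]
      _ = ∑ v ∈ aoiiStates F G, ∑ u ∈ aoiiStates F G, aoiiPn F G pt q m s u * (aoiiPn F G pt q n u v * aoiiP F G pt q v s') := by
          simp [Finset.sum_mul, mul_assoc]
      _ = ∑ u ∈ aoiiStates F G, ∑ v ∈ aoiiStates F G, aoiiPn F G pt q m s u * (aoiiPn F G pt q n u v * aoiiP F G pt q v s') := Finset.sum_comm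
      _ = ∑ u ∈ aoiiStates F G, aoiiPn F G pt q m s u * ∑ v ∈ aoiiStates F G, aoiiPn F G pt q n u v * aoiiP F G pt q v s' := by
          simp [Finset.mul_sum]
      _ = ∑ u ∈ aoiiStates F G, aoiiPn F G pt q m s u * aoiiPn F G pt q (n+1) u s' := rfl

lemma aoiiPn_ge (F G : ℕ) (pt : ℝ) (q : ℕ × ℕ → ℝ) (hpt0 : 0 < pt) (hpt : pt < 1/2)
    (hq : ∀ s ∈ aoiiStates F G, 0 ≤ q s ∧ q s < 1)
    (m n : ℕ) (s : ℕ×ℕ) {u s' : ℕ×ℕ} (hu : u ∈ aoiiStates F G) (hs' : s' ∈ aoiiStates F G) :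
    aoiiPn F G pt q m s u * aoiiPn F G pt q n u s' ≤ aoiiPn F G pt q (m+n) s s' := by
  rw [aoiiPn_add F G pt q m n s s' hs']
  exact Finset.single_le_sum (fun v _ => mul_nonneg
    (aoiiPn_nonneg F G pt q hpt0 hpt hq m s v) (aoiiPn_nonneg F G pt q hpt0 hpt hq n v s')) hu

lemma aoiiPn_one (F G : ℕ) (pt : ℝ) (q : ℕ × ℕ → ℝ) {s : ℕ×ℕ} (hs : s ∈ aoiiStates F G)
    (s' : ℕ×ℕ) : aoiiPn F G pt q 1 s s' = aoiiP F G pt q s s' := by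
  show (∑ u ∈ aoiiStates F G, (if s = u then (1:ℝ) else 0) * aoiiP F G pt q u s') = _
  rw [Finset.sum_eq_single s (fun u _ hus => by rw [if_neg (fun h => hus h.symm), zero_mul])
    (fun h => absurd hs h)]
  rw [if_pos rfl, one_mul]

section Edges
variable (F G : ℕ) (pt : ℝ) (q : ℕ × ℕ → ℝ)

lemma edge_loop (hpt : pt < 1/2) : 0 < aoiiP F G pt q (0,0) (0,0) := by
  unfold aoiiP
  norm_num [Prod.ext_iff]
  linarith

lemma edge_start (hpt0 : 0 < pt) : 0 < aoiiP F G pt q (0,0) (1,1) := by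
  unfold aoiiP
  norm_num [Prod.ext_iff]
  linarith

lemma edge_zero1 (hpt0 : 0 < pt) (hpt : pt < 1/2) (f : ℕ) (hf : 1 ≤ f) (h0 : 0 ≤ q (f,1)) :
    0 < aoiiP F G pt q (f,1) (0,0) := by
  have hne : ((f:ℕ),(1:ℕ)) ≠ (0,0) := by simp [Prod.ext_iff]
  unfold aoiiP
  rw [if_neg hne]
  norm_num [Prod.ext_iff]
  nlinarith

lemma edge_up1 (hpt : pt < 1/2) (f : ℕ) (hf1 : 1 ≤ f) (hfF : f + 1 ≤ F) (h1 : q (f,1) < 1) :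
    0 < aoiiP F G pt q (f,1) (f+1,1) := by
  have hne : ((f:ℕ),(1:ℕ)) ≠ (0,0) := by simp [Prod.ext_iff]
  have hmin : min (f+1) F = f+1 := by omega
  unfold aoiiP
  rw [if_neg hne]
  norm_num [Prod.ext_iff, hmin]
  nlinarith

lemma edge_diag1 (hpt0 : 0 < pt) (f : ℕ) (hf1 : 1 ≤ f) (hfF : f + 1 ≤ F) (h1 : q (f,1) < 1) :
    0 < aoiiP F G pt q (f,1) (f+1,2) := by
  have hne : ((f:ℕ),(1:ℕ)) ≠ (0,0) := by simp [Prod.ext_iff]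
  have hmin : min (f+1) F = f+1 := by omega
  unfold aoiiP
  rw [if_neg hne]
  norm_num [Prod.ext_iff, hmin]
  nlinarith

lemma edge_diag (hpt0 : 0 < pt) (hpt : pt < 1/2) (f g : ℕ) (hg : 2 ≤ g) (hfF : f+1 ≤ F)
    (hgG : g+1 ≤ G) (h0 : 0 ≤ q (f,g)) (h1 : q (f,g) < 1) :
    0 < aoiiP F G pt q (f,g) (f+1,g+1) := by
  have hne : ((f:ℕ),(g:ℕ)) ≠ (0,0) := by simp [Prod.ext_iff]; omega
  have hg1 : ((f:ℕ),(g:ℕ)).2 ≠ 1 := by simp; omega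
  have hmin : min (f+1) F = f+1 := by omega
  have hmin2 : min (g+1) G = g+1 := by omega
  have a1 : 0 < pt * (1 - q (f,g)) := mul_pos hpt0 (by linarith)
  have a2 : 0 ≤ (1 - 2*pt) * (1 - q (f,g)) := mul_nonneg (by linarith) (by linarith)
  unfold aoiiP
  rw [if_neg hne, if_neg hg1]
  have e1 : ((f:ℕ)+1, g+1) = (min (f+1) F, min (g+1) G) := by rw [hmin, hmin2]
  rw [if_pos e1]
  split_ifs <;> linarith

lemma edge_down (hpt0 : 0 < pt) (hpt : pt < 1/2) (f g : ℕ) (hg : 2 ≤ g) (hgG : g ≤ G)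
    (h0 : 0 ≤ q (f,g)) (h1 : q (f,g) < 1) :
    0 < aoiiP F G pt q (f,g) (min (f+1) F, g-1) := by
  have hne : ((f:ℕ),(g:ℕ)) ≠ (0,0) := by simp [Prod.ext_iff]; omega
  have hg1 : ((f:ℕ),(g:ℕ)).2 ≠ 1 := by simp; omega
  have a1 : 0 < pt * (1 - q (f,g)) := mul_pos hpt0 (by linarith)
  have a2 : 0 ≤ (1 - 2*pt) * (1 - q (f,g)) := mul_nonneg (by linarith) (by linarith)
  unfold aoiiP
  rw [if_neg hne, if_neg hg1]
  rw [if_pos rfl]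
  split_ifs <;> linarith

lemma fromZero (hGF : G ≤ F) (hG : 2 ≤ G) (hpt0 : 0 < pt) (hpt : pt < 1/2)
    (hq : ∀ s ∈ aoiiStates F G, 0 ≤ q s ∧ q s < 1) :
    ∀ f g, (f,g) ∈ aoiiStates F G → 0 < aoiiPn F G pt q f (0,0) (f,g) := by
  intro f
  induction f with
  | zero =>
    intro g hmem
    rw [mem_aoii] at hmem
    simp only [Prod.ext_iff] at hmem
    have hg0 : g = 0 := by omega
    subst hg0
    show (0:ℝ) < if ((0,0):ℕ×ℕ) = (0,0) then 1 else 0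
    norm_num
  | succ f ih =>
    intro g hmem
    have hmem' := hmem
    rw [mem_aoii] at hmem'
    simp only [Prod.ext_iff] at hmem'
    have hfF : f + 1 ≤ F := by omega
    have hg1 : 1 ≤ g := by omega
    have hgf : g ≤ f + 1 := by omega
    have hgG : g ≤ G := by omega
    rcases Nat.eq_zero_or_pos f with hf0 | hf1
    · -- f = 0, so g = 1
      subst hf0
      have hgone : g = 1 := by omega
      subst hgone
      rw [aoiiPn_one F G pt q (zero_mem F G)]
      exact edge_start F G pt q hpt0
    · -- f ≥ 1
      rcases Nat.lt_or_ge g 2 with hg2 | hg2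
      · -- g = 1
        have hgone : g = 1 := by omega
        subst hgone
        have hu : ((f:ℕ),(1:ℕ)) ∈ aoiiStates F G := by
          rw [mem_aoii]; right; dsimp only; omega
        have hstep : 0 < aoiiPn F G pt q 1 (f,1) (f+1,1) := by
          rw [aoiiPn_one F G pt q hu]
          exact edge_up1 F G pt q hpt f hf1 hfF (hq _ hu).2
        calc (0:ℝ) < aoiiPn F G pt q f (0,0) (f,1) * aoiiPn F G pt q 1 (f,1) (f+1,1) :=
              mul_pos (ih 1 hu) hstep
          _ ≤ aoiiPn F G pt q (f+1) (0,0) (f+1,1) :=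
              aoiiPn_ge F G pt q hpt0 hpt hq f 1 (0,0) hu hmem
      · -- g ≥ 2, come from (f, g-1)
        have hu : ((f:ℕ), g-1) ∈ aoiiStates F G := by
          rw [mem_aoii]; right; dsimp only; omega
        have hstep : 0 < aoiiPn F G pt q 1 (f,g-1) (f+1,g) := by
          rw [aoiiPn_one F G pt q hu]
          rcases Nat.lt_or_ge (g-1) 2 with hgm | hgm
          · -- g = 2
            have hgtwo : g = 2 := by omega
            subst hgtwo
            exact edge_diag1 F G pt q hpt0 f hf1 hfF (hq _ hu).2
          · -- g ≥ 3
            have e : g - 1 + 1 = g := by omega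
            have := edge_diag F G pt q hpt0 hpt f (g-1) hgm hfF (by omega)
              (hq _ hu).1 (hq _ hu).2
            rwa [e] at this
        calc (0:ℝ) < aoiiPn F G pt q f (0,0) (f,g-1) * aoiiPn F G pt q 1 (f,g-1) (f+1,g) :=
              mul_pos (ih (g-1) hu) hstep
          _ ≤ aoiiPn F G pt q (f+1) (0,0) (f+1,g) :=
              aoiiPn_ge F G pt q hpt0 hpt hq f 1 (0,0) hu hmem

lemma toZero (hGF : G ≤ F) (hG : 2 ≤ G) (hpt0 : 0 < pt) (hpt : pt < 1/2)
    (hq : ∀ s ∈ aoiiStates F G, 0 ≤ q s ∧ q s < 1) :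
    ∀ g f, (f, g+1) ∈ aoiiStates F G → 0 < aoiiPn F G pt q (g+1) (f,g+1) (0,0) := by
  intro g
  induction g with
  | zero =>
    intro f hmem
    rw [aoiiPn_one F G pt q hmem]
    have hf1 : 1 ≤ f := by
      rw [mem_aoii] at hmem
      simp only [Prod.ext_iff] at hmem
      omega
    exact edge_zero1 F G pt q hpt0 hpt f hf1 (hq _ hmem).1
  | succ g ih =>
    intro f hmem
    have hmem' := hmem
    rw [mem_aoii] at hmem'
    simp only [Prod.ext_iff] at hmem'
    have hf1 : 1 ≤ f := by omega
    have hfF : f ≤ F := by omega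
    have hgf : g + 2 ≤ f := by omega
    have hgG : g + 2 ≤ G := by omega
    have hu : ((min (f+1) F : ℕ), g+1) ∈ aoiiStates F G := by
      rw [mem_aoii]; right; dsimp only; omega
    have hstep : 0 < aoiiPn F G pt q 1 (f,g+2) (min (f+1) F, g+1) := by
      rw [aoiiPn_one F G pt q hmem]
      exact edge_down F G pt q hpt0 hpt f (g+2) (by omega) hgG (hq _ hmem).1 (hq _ hmem).2
    have hz : ((0,0):ℕ×ℕ) ∈ aoiiStates F G := zero_mem F G
    calc (0:ℝ) < aoiiPn F G pt q 1 (f,g+2) (min (f+1) F, g+1) *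
          aoiiPn F G pt q (g+1) (min (f+1) F, g+1) (0,0) :=
          mul_pos hstep (ih _ hu)
      _ ≤ aoiiPn F G pt q (1+(g+1)) (f,g+2) (0,0) :=
          aoiiPn_ge F G pt q hpt0 hpt hq 1 (g+1) (f,g+2) hu hz
      _ = aoiiPn F G pt q (g+2) (f,g+2) (0,0) := by rw [show 1+(g+1) = g+2 from by omega]

lemma loopZero (hpt0 : 0 < pt) (hpt : pt < 1/2)
    (hq : ∀ s ∈ aoiiStates F G, 0 ≤ q s ∧ q s < 1) :
    ∀ n, 0 < aoiiPn F G pt q n (0,0) (0,0) := by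
  intro n
  induction n with
  | zero =>
    show (0:ℝ) < if ((0,0):ℕ×ℕ) = (0,0) then 1 else 0
    norm_num
  | succ n ih =>
    have h1 : 0 < aoiiPn F G pt q 1 (0,0) (0,0) := by
      rw [aoiiPn_one F G pt q (zero_mem F G)]
      exact edge_loop F G pt q hpt
    calc (0:ℝ) < aoiiPn F G pt q n (0,0) (0,0) * aoiiPn F G pt q 1 (0,0) (0,0) :=
          mul_pos ih h1
      _ ≤ aoiiPn F G pt q (n+1) (0,0) (0,0) :=
          aoiiPn_ge F G pt q hpt0 hpt hq n 1 (0,0) (zero_mem F G) (zero_mem F G)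

end Edges

theorem aoii_primitive' (F G : ℕ) (hGF : G ≤ F) (hG : 2 ≤ G)
    (pt : ℝ) (hpt0 : 0 < pt) (hpt : pt < 1 / 2)
    (q : ℕ × ℕ → ℝ) (hq : ∀ s ∈ aoiiStates F G, 0 ≤ q s ∧ q s < 1)
    (hq0 : q (0, 0) = 0) :
    ∃ N : ℕ, ∀ n ≥ N, ∀ s ∈ aoiiStates F G, ∀ s' ∈ aoiiStates F G,
      0 < aoiiPn F G pt q n s s' := by
  refine ⟨G + F, fun n hn s hs s' hs' => ?_⟩
  have hz : ((0,0):ℕ×ℕ) ∈ aoiiStates F G := zero_mem F G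
  -- reach (0,0) from s in exactly G steps
  have h1 : 0 < aoiiPn F G pt q G s (0,0) := by
    obtain ⟨f, g⟩ := s
    have hm := hs
    rw [mem_aoii] at hm
    simp only [Prod.ext_iff] at hm
    rcases hm with h | h
    · obtain ⟨rfl, rfl⟩ := h
      exact loopZero F G pt q hpt0 hpt hq G
    · have hg1 : 1 ≤ g := by omega
      have hgG : g ≤ G := by omega
      have e : g - 1 + 1 = g := by omega
      have ht : 0 < aoiiPn F G pt q g (f,g) (0,0) := by
        have := toZero F G pt q hGF hG hpt0 hpt hq (g-1) f (by rw [e]; exact hs)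
        rwa [e] at this
      calc (0:ℝ) < aoiiPn F G pt q g (f,g) (0,0) * aoiiPn F G pt q (G-g) (0,0) (0,0) :=
            mul_pos ht (loopZero F G pt q hpt0 hpt hq (G-g))
        _ ≤ aoiiPn F G pt q (g+(G-g)) (f,g) (0,0) :=
            aoiiPn_ge F G pt q hpt0 hpt hq g (G-g) (f,g) hz hz
        _ = aoiiPn F G pt q G (f,g) (0,0) := by rw [show g+(G-g) = G by omega]
  -- reach s' from (0,0) in exactly n - G steps
  have h2 : 0 < aoiiPn F G pt q (n-G) (0,0) s' := by
    obtain ⟨f, g⟩ := s'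
    have hm := hs'
    rw [mem_aoii] at hm
    simp only [Prod.ext_iff] at hm
    rcases hm with h | h
    · obtain ⟨rfl, rfl⟩ := h
      exact loopZero F G pt q hpt0 hpt hq (n-G)
    · have hfF : f ≤ F := by omega
      calc (0:ℝ) < aoiiPn F G pt q (n-G-f) (0,0) (0,0) * aoiiPn F G pt q f (0,0) (f,g) :=
            mul_pos (loopZero F G pt q hpt0 hpt hq (n-G-f))
              (fromZero F G pt q hGF hG hpt0 hpt hq f g hs')
        _ ≤ aoiiPn F G pt q ((n-G-f)+f) (0,0) (f,g) :=
            aoiiPn_ge F G pt q hpt0 hpt hq (n-G-f) f (0,0) hz hs'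
        _ = aoiiPn F G pt q (n-G) (0,0) (f,g) := by rw [show (n-G-f)+f = n-G by omega]
  calc (0:ℝ) < aoiiPn F G pt q G s (0,0) * aoiiPn F G pt q (n-G) (0,0) s' :=
        mul_pos h1 h2
    _ ≤ aoiiPn F G pt q (G+(n-G)) s s' :=
        aoiiPn_ge F G pt q hpt0 hpt hq G (n-G) s hz hs'
    _ = aoiiPn F G pt q n s s' := by rw [show G+(n-G) = n by omega]

/-- The truncated AoII Markov chain is primitive (irreducible and aperiodic):
some power of the transition matrix, and every larger power, has all entries
positive. -/
theorem aoii_primitive (F G : ℕ) (hGF : G ≤ F) (hG : 2 ≤ G)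
    (pt : ℝ) (hpt0 : 0 < pt) (hpt : pt < 1 / 2)
    (q : ℕ × ℕ → ℝ) (hq : ∀ s ∈ aoiiStates F G, 0 ≤ q s ∧ q s < 1)
    (hq0 : q (0, 0) = 0) :
    ∃ N : ℕ, ∀ n ≥ N, ∀ s ∈ aoiiStates F G, ∀ s' ∈ aoiiStates F G,
      0 < aoiiPn F G pt q n s s' := by
  exact aoii_primitive' F G hGF hG pt hpt0 hpt q hq hq0
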